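/- arXiv:math/0610106 — 3 statements merged into one kernel-verified Lean document; each statement's English description precedes it below -/
import Mathlib

section
/- For the *-general model with good boundary conditions: if V ⊆ Λ are finite subsets of ℤ^d, then gap(ℒ_Λ) ≤ gap(ℒ_V). -/
open Set ENNReal

namespace KCSM

abbrev Site (d : ℕ) := Fin d → ℤ

/-- The *-oriented neighbourhood `K*_x = {x + Σ αᵢ eᵢ : αᵢ ∈ {0,1}, not all 0}`. -/
def Kstar {d : ℕ} (x : Site d) : Set (Site d) :=
  {y | y ≠ x ∧ ∀ i, y i = x i ∨ y i = x i + 1}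

variable {d : ℕ} {S : Type}

/-- Product weight of a configuration on `Λ`. -/
def weight [Fintype S] (ν : S → ℝ) (Λ : Finset (Site d)) (σ : ↥Λ → S) : ℝ :=
  ∏ x : ↥Λ, ν (σ x)

/-- Mean of `f` under the product measure `ν^{⊗Λ}`. -/
def mean [Fintype S] (ν : S → ℝ) (Λ : Finset (Site d)) (f : (↥Λ → S) → ℝ) : ℝ :=
  ∑ σ : ↥Λ → S, weight ν Λ σ * f σ

/-- Variance of `f` under the product measure `ν^{⊗Λ}`. -/
def varTot [Fintype S] (ν : S → ℝ) (Λ : Finset (Site d)) (f : (↥Λ → S) → ℝ) : ℝ :=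
  mean ν Λ (fun σ => f σ ^ 2) - (mean ν Λ f) ^ 2

/-- The local variance `Var_x(f)(σ)`: variance under `ν` of `s ↦ f(σ^{x←s})`. -/
def varAt [Fintype S] (ν : S → ℝ) (Λ : Finset (Site d)) (x : ↥Λ)
    (f : (↥Λ → S) → ℝ) (σ : ↥Λ → S) : ℝ :=
  (∑ s : S, ν s * f (Function.update σ x s) ^ 2) -
    (∑ s : S, ν s * f (Function.update σ x s)) ^ 2

/-- The constraint of the *-general model with good boundary conditions:
every site of `K*_x` lying inside `Λ` is in the good set `G`. -/
def starConstr (G : Set S) (Λ : Finset (Site d)) (x : ↥Λ) (σ : ↥Λ → S) : Prop :=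
  ∀ y : ↥Λ, (y : Site d) ∈ Kstar (x : Site d) → σ y ∈ G

open Classical in
/-- Dirichlet form of the *-general model on `Λ` with good boundary conditions. -/
noncomputable def starDirichlet [Fintype S] (ν : S → ℝ) (G : Set S)
    (Λ : Finset (Site d)) (f : (↥Λ → S) → ℝ) : ℝ :=
  ∑ x : ↥Λ, ∑ σ : ↥Λ → S,
    weight ν Λ σ * (if starConstr G Λ x σ then varAt ν Λ x f σ else 0)

/-- Spectral gap of the *-general model on `Λ` with good boundary conditions:
infimum of `D_Λ(f)/Var(f)` over nonconstant `f`. -/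
noncomputable def starGap [Fintype S] (ν : S → ℝ) (G : Set S)
    (Λ : Finset (Site d)) : ℝ≥0∞ :=
  ⨅ f : {f : (↥Λ → S) → ℝ // ∃ σ σ', f σ ≠ f σ'},
    ENNReal.ofReal (starDirichlet ν G Λ f.1) / ENNReal.ofReal (varTot ν Λ f.1)

/-! A test function `f` on `V` lifts to `Λ` as `f ∘ r`, where `r` restricts configurations to
`V`; the lift of a nonconstant `f` is nonconstant. The product measure on `Λ` marginalises to
the one on `V`, so the variance is unchanged. In the Dirichlet form the sites outside `V`
contribute nothing, since the lift does not depend on them; at a site of `V` the local variances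
agree, and with good boundary conditions the constraint in `Λ` implies the constraint in `V`.
Hence `D_Λ(f ∘ r) ≤ D_V(f)`. -/

open Finset Function

theorem sum_prod_mul_comp_embedding {ι κ S : Type*} [Fintype ι] [DecidableEq ι] [Fintype κ]
    [DecidableEq κ] [Fintype S] (ν : S → ℝ) (hsum : ∑ s, ν s = 1) (e : κ ↪ ι)
    (g : (κ → S) → ℝ) :
    ∑ σ : ι → S, (∏ i, ν (σ i)) * g (σ ∘ e) = ∑ τ : κ → S, (∏ k, ν (τ k)) * g τ := by
  classical
  let R := {i // i ∉ Set.range e}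
  let E : κ ⊕ R ≃ ι := (Equiv.sumCongr (Equiv.ofInjective e e.injective) (Equiv.refl R)).trans
    (Equiv.sumCompl (· ∈ Set.range e))
  have hE : ∀ k, E.symm (e k) = Sum.inl k := fun k => E.symm_apply_eq.2 rfl
  let P : (κ → S) × (R → S) ≃ (ι → S) :=
    (Equiv.sumArrowEquivProdArrow κ R S).symm.trans (E.arrowCongr (Equiv.refl S))
  have hP_comp (τ : κ → S) (ρ : R → S) : P (τ, ρ) ∘ e = τ := by
    funext k
    simp [P, Equiv.arrowCongr_apply, hE]
  have hP_weight (τ : κ → S) (ρ : R → S) :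
      ∏ i, ν (P (τ, ρ) i) = (∏ k, ν (τ k)) * ∏ r, ν (ρ r) := by
    rw [← E.prod_comp, Fintype.prod_sum_type]
    simp [P, Equiv.arrowCongr_apply]
  have hR : ∑ ρ : R → S, ∏ r, ν (ρ r) = 1 := by
    rw [← Fintype.prod_sum (fun (_ : R) s => ν s), hsum, prod_const_one]
  rw [← P.sum_comp, Fintype.sum_prod_type]
  refine sum_congr rfl fun τ _ => ?_
  simp only [hP_comp, hP_weight, mul_right_comm _ _ (g τ), ← mul_sum, hR, mul_one]

theorem sq_sum_mul_le_sum_mul_sq {S : Type*} [Fintype S] {ν : S → ℝ} (hν : ∀ s, 0 ≤ ν s)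
    (hsum : ∑ s, ν s = 1) (a : S → ℝ) : (∑ s, ν s * a s) ^ 2 ≤ ∑ s, ν s * a s ^ 2 := by
  simpa [hsum] using sum_sq_le_sum_mul_sum_of_sq_le_mul univ (fun s _ => hν s)
    (fun s _ => mul_nonneg (hν s) (sq_nonneg (a s))) (fun s _ => (by ring : _ = ν s * _).le)

section Restriction

variable {V Λ : Finset (Site d)}

def subsetEmbedding (h : V ⊆ Λ) : ↥V ↪ ↥Λ :=
  embeddingOfSubset _ _ (coe_subset.2 h)

theorem mem_range_subsetEmbedding (h : V ⊆ Λ) {x : ↥Λ} :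
    x ∈ range (subsetEmbedding h) ↔ (x : Site d) ∈ V :=
  ⟨fun ⟨y, hy⟩ => hy ▸ y.2, fun hx => ⟨⟨x, hx⟩, rfl⟩⟩

theorem starConstr.comp_subsetEmbedding {G : Set S} (h : V ⊆ Λ) {y : ↥V} {σ : ↥Λ → S}
    (hc : starConstr G Λ (subsetEmbedding h y) σ) :
    starConstr G V y (σ ∘ subsetEmbedding h) :=
  fun z hz => hc (subsetEmbedding h z) hz

variable [Fintype S] {ν : S → ℝ}

theorem mean_mono (hν : ∀ s, 0 ≤ ν s) {f g : (↥Λ → S) → ℝ} (hfg : ∀ σ, f σ ≤ g σ) :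
    mean ν Λ f ≤ mean ν Λ g :=
  sum_le_sum fun σ _ => mul_le_mul_of_nonneg_left (hfg σ) (prod_nonneg fun _ _ => hν _)

theorem mean_comp_subsetEmbedding (h : V ⊆ Λ) (hsum : ∑ s, ν s = 1) (g : (↥V → S) → ℝ) :
    mean ν Λ (fun σ => g (σ ∘ subsetEmbedding h)) = mean ν V g :=
  sum_prod_mul_comp_embedding ν hsum (subsetEmbedding h) g

theorem varTot_comp_subsetEmbedding (h : V ⊆ Λ) (hsum : ∑ s, ν s = 1) (f : (↥V → S) → ℝ) :
    varTot ν Λ (fun σ => f (σ ∘ subsetEmbedding h)) = varTot ν V f := by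
  rw [varTot, varTot, ← mean_comp_subsetEmbedding h hsum f,
    ← mean_comp_subsetEmbedding h hsum (fun τ => f τ ^ 2)]

theorem varAt_nonneg (hν : ∀ s, 0 ≤ ν s) (hsum : ∑ s, ν s = 1) (x : ↥Λ)
    (f : (↥Λ → S) → ℝ) (σ : ↥Λ → S) : 0 ≤ varAt ν Λ x f σ :=
  sub_nonneg.2 (sq_sum_mul_le_sum_mul_sq hν hsum _)

theorem varAt_comp_subsetEmbedding_of_notMem (h : V ⊆ Λ) (hsum : ∑ s, ν s = 1)
    (f : (↥V → S) → ℝ) {x : ↥Λ} (hx : (x : Site d) ∉ V) (σ : ↥Λ → S) :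
    varAt ν Λ x (fun σ => f (σ ∘ subsetEmbedding h)) σ = 0 := by
  have hσ (s : S) : update σ x s ∘ subsetEmbedding h = σ ∘ subsetEmbedding h :=
    update_comp_eq_of_forall_ne _ _ fun y hy => hx (hy ▸ y.2)
  simp only [varAt, hσ, ← sum_mul, hsum, one_mul, sub_self]

theorem varAt_comp_subsetEmbedding (h : V ⊆ Λ) (f : (↥V → S) → ℝ) (y : ↥V) (σ : ↥Λ → S) :
    varAt ν Λ (subsetEmbedding h y) (fun σ => f (σ ∘ subsetEmbedding h)) σ
      = varAt ν V y f (σ ∘ subsetEmbedding h) := by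
  simp only [varAt, update_comp_eq_of_injective _ (subsetEmbedding h).injective]

open Classical in
theorem starDirichlet_comp_subsetEmbedding_le (h : V ⊆ Λ) (hν : ∀ s, 0 ≤ ν s)
    (hsum : ∑ s, ν s = 1) (G : Set S) (f : (↥V → S) → ℝ) :
    starDirichlet ν G Λ (fun σ => f (σ ∘ subsetEmbedding h)) ≤ starDirichlet ν G V f := by
  have h_out (x : ↥Λ) (hx : x ∉ range (subsetEmbedding h)) :
      ∑ σ : ↥Λ → S, weight ν Λ σ * (if starConstr G Λ x σ then
        varAt ν Λ x (fun σ => f (σ ∘ subsetEmbedding h)) σ else 0) = 0 := by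
    simp [varAt_comp_subsetEmbedding_of_notMem h hsum f ((mem_range_subsetEmbedding h).not.1 hx)]
  rw [starDirichlet, starDirichlet,
    ← Fintype.sum_of_injective _ (subsetEmbedding h).injective _ _ h_out fun _ => rfl]
  refine sum_le_sum fun y _ => ?_
  let localVar (τ : ↥V → S) : ℝ := if starConstr G V y τ then varAt ν V y f τ else 0
  calc _ ≤ mean ν Λ (fun σ => localVar (σ ∘ subsetEmbedding h)) := mean_mono hν fun σ => ?_
    _ = mean ν V localVar := mean_comp_subsetEmbedding h hsum localVar
  dsimp only [localVar]
  rw [varAt_comp_subsetEmbedding]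
  split_ifs with hΛ hV
  · rfl
  · exact absurd (hΛ.comp_subsetEmbedding h) hV
  · exact varAt_nonneg hν hsum _ _ _
  · rfl

end Restriction

/-- Monotonicity of the spectral gap of the *-general model:
if `V ⊆ Λ` then `gap(ℒ_Λ) ≤ gap(ℒ_V)`. -/
theorem starGap_mono {d : ℕ} {S : Type} [Fintype S]
    (ν : S → ℝ) (hν : ∀ s, 0 < ν s) (hsum : ∑ s : S, ν s = 1)
    (G : Set S) (V Λ : Finset (Site d)) (hVΛ : V ⊆ Λ) :
    starGap ν G Λ ≤ starGap ν G V := by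
  obtain ⟨s₀, -⟩ := univ.nonempty_of_sum_ne_zero (hsum ▸ one_ne_zero : ∑ s, ν s ≠ 0)
  have : Nonempty S := ⟨s₀⟩
  refine le_iInf fun ⟨f, τ₀, τ₁, hf⟩ => ?_
  obtain ⟨σ₀, rfl⟩ := (subsetEmbedding hVΛ).injective.surjective_comp_right τ₀
  obtain ⟨σ₁, rfl⟩ := (subsetEmbedding hVΛ).injective.surjective_comp_right τ₁
  let lift : {F : (↥Λ → S) → ℝ // ∃ σ σ', F σ ≠ F σ'} :=
    ⟨fun σ => f (σ ∘ subsetEmbedding hVΛ), σ₀, σ₁, hf⟩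
  calc starGap ν G Λ
      ≤ .ofReal (starDirichlet ν G Λ lift.1) / .ofReal (varTot ν Λ lift.1) := iInf_le _ lift
    _ ≤ .ofReal (starDirichlet ν G V f) / .ofReal (varTot ν V f) := by
      rw [varTot_comp_subsetEmbedding hVΛ hsum]
      gcongr
      exact starDirichlet_comp_subsetEmbedding_le hVΛ (fun s => (hν s).le) hsum G f

end KCSM
end

section
/- Let (S,ν) be a finite probability space with ν(s) > 0 for all s, let B₁ and B₂ be disjoint nonempty finite sets, Λ = B₁ ∪ B₂, and let μ be the product measure ν^{⊗Λ} on S^Λ. Let c₁ : S^Λ → {0,1} be a function depending only on the coordinates in B₂, and set ε = μ(c₁ = 0). For f : S^Λ → ℝ let Var_{B₁}(f) denote the conditional variance of f obtained by resampling the coordinates in B₁ from ν^{⊗B₁} with the coordinates in B₂ held fixed (a function of the B₂-coordinates), and similarly Var_{B₂}(f). Then for every f : S^Λ → ℝ, (1 − √ε)·Var_μ(f) ≤ μ( c₁·Var_{B₁}(f) ) + μ( Var_{B₂}(f) ); equivalently, the spectral gap of the constrained block dynamics with generator ℒ_block f = c₁(π₂f − f) + (π₁f − f), where π₁f = E_μ[f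 | coordinates in B₁] and π₂f = E_μ[f | coordinates in B₂], is at least 1 − √ε. -/
/-!
Center `f` and let `g` be its `B₁`-average, a mean-zero function of the `B₂`-coordinates. Then
`μ(Var_{B₂} f) = μ(f²) - μ(h²)` for the `B₂`-average `h` of `f`, and since `μ(g) = 0`, `h` is the
sum of the `B₂`-averages of `c₁(f - g)` and `(1 - c₁)(f - g)`. By Cauchy–Schwarz their second
moments are at most `(1 - ε)P` and `εQ`, where `P = μ(c₁ Var_{B₁} f)` and
`Q = μ((1 - c₁) Var_{B₁} f)`; AM–GM on the cross term gives `μ(h²) ≤ P + √ε (P + Q)`, and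
`P + Q ≤ μ(f²)` closes the argument.
-/

namespace KCSM

variable {S B₁ B₂ : Type}

/-- Replace the `B₁`-coordinates of `ω` by `σ₁`. -/
def patch₁ (σ₁ : B₁ → S) (ω : B₁ ⊕ B₂ → S) : B₁ ⊕ B₂ → S :=
  Sum.elim σ₁ (fun b => ω (Sum.inr b))

/-- Replace the `B₂`-coordinates of `ω` by `σ₂`. -/
def patch₂ (σ₂ : B₂ → S) (ω : B₁ ⊕ B₂ → S) : B₁ ⊕ B₂ → S :=
  Sum.elim (fun b => ω (Sum.inl b)) σ₂

/-- Mean under the product measure `ν^{⊗(B₁⊔B₂)}`. -/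
def blockMean [Fintype S] [Fintype B₁] [Fintype B₂] [DecidableEq B₁] [DecidableEq B₂] (ν : S → ℝ)
    (f : (B₁ ⊕ B₂ → S) → ℝ) : ℝ :=
  ∑ ω : B₁ ⊕ B₂ → S, (∏ x : B₁ ⊕ B₂, ν (ω x)) * f ω

/-- Variance under the product measure `ν^{⊗(B₁⊔B₂)}`. -/
def blockVar [Fintype S] [Fintype B₁] [Fintype B₂] [DecidableEq B₁] [DecidableEq B₂] (ν : S → ℝ)
    (f : (B₁ ⊕ B₂ → S) → ℝ) : ℝ :=
  blockMean ν (fun ω => f ω ^ 2) - (blockMean ν f) ^ 2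

/-- The conditional variance `Var_{B₁}(f)(ω)`: resample the `B₁`-coordinates from
`ν^{⊗B₁}`, keeping the `B₂`-coordinates of `ω` fixed. -/
def varB₁ [Fintype S] [Fintype B₁] [DecidableEq B₁] (ν : S → ℝ)
    (f : (B₁ ⊕ B₂ → S) → ℝ) (ω : B₁ ⊕ B₂ → S) : ℝ :=
  (∑ σ₁ : B₁ → S, (∏ b : B₁, ν (σ₁ b)) * f (patch₁ σ₁ ω) ^ 2) -
    (∑ σ₁ : B₁ → S, (∏ b : B₁, ν (σ₁ b)) * f (patch₁ σ₁ ω)) ^ 2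

/-- The conditional variance `Var_{B₂}(f)(ω)`: resample the `B₂`-coordinates from
`ν^{⊗B₂}`, keeping the `B₁`-coordinates of `ω` fixed. -/
def varB₂ [Fintype S] [Fintype B₂] [DecidableEq B₂] (ν : S → ℝ)
    (f : (B₁ ⊕ B₂ → S) → ℝ) (ω : B₁ ⊕ B₂ → S) : ℝ :=
  (∑ σ₂ : B₂ → S, (∏ b : B₂, ν (σ₂ b)) * f (patch₂ σ₂ ω) ^ 2) -
    (∑ σ₂ : B₂ → S, (∏ b : B₂, ν (σ₂ b)) * f (patch₂ σ₂ ω)) ^ 2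

open Finset

section WeightedMean

variable {ι κ : Type*} [Fintype ι] [Fintype κ]

def weightedMean (w x : ι → ℝ) : ℝ := ∑ i, w i * x i

def weightedVar (w x : ι → ℝ) : ℝ :=
  weightedMean w (fun i => x i ^ 2) - weightedMean w x ^ 2

variable {w : ι → ℝ}

lemma weightedMean_const (hw : ∑ i, w i = 1) (a : ℝ) : weightedMean w (fun _ => a) = a := by
  rw [weightedMean, ← sum_mul, hw, one_mul]

lemma weightedMean_add (x y : ι → ℝ) :
    weightedMean w (fun i => x i + y i) = weightedMean w x + weightedMean w y := by
  simp only [weightedMean, mul_add, sum_add_distrib]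

lemma weightedMean_sub (x y : ι → ℝ) :
    weightedMean w (fun i => x i - y i) = weightedMean w x - weightedMean w y := by
  simp only [weightedMean, mul_sub, sum_sub_distrib]

lemma weightedMean_const_mul (a : ℝ) (x : ι → ℝ) :
    weightedMean w (fun i => a * x i) = a * weightedMean w x := by
  simp only [weightedMean, mul_sum, mul_left_comm]

lemma weightedMean_mul_const (x : ι → ℝ) (a : ℝ) :
    weightedMean w (fun i => x i * a) = weightedMean w x * a := by
  simp only [weightedMean, sum_mul, mul_assoc]

lemma weightedMean_mono (hw0 : ∀ i, 0 ≤ w i) {x y : ι → ℝ} (h : ∀ i, x i ≤ y i) :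
    weightedMean w x ≤ weightedMean w y :=
  sum_le_sum fun i _ => mul_le_mul_of_nonneg_left (h i) (hw0 i)

lemma weightedMean_nonneg (hw0 : ∀ i, 0 ≤ w i) {x : ι → ℝ} (h : ∀ i, 0 ≤ x i) :
    0 ≤ weightedMean w x :=
  sum_nonneg fun i _ => mul_nonneg (hw0 i) (h i)

lemma weightedMean_comm (w₁ : ι → ℝ) (w₂ : κ → ℝ) (F : ι → κ → ℝ) :
    weightedMean w₁ (fun i => weightedMean w₂ (F i)) =
      weightedMean w₂ (fun j => weightedMean w₁ (fun i => F i j)) := by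
  simp only [weightedMean, mul_sum]
  rw [sum_comm]
  simp only [mul_left_comm]

def prodWeight (w₁ : ι → ℝ) (w₂ : κ → ℝ) (p : ι × κ) : ℝ := w₁ p.1 * w₂ p.2

lemma sum_prodWeight {w₁ : ι → ℝ} {w₂ : κ → ℝ} (hw₁ : ∑ i, w₁ i = 1) (hw₂ : ∑ j, w₂ j = 1) :
    ∑ p, prodWeight w₁ w₂ p = 1 := by
  simp only [prodWeight, Fintype.sum_prod_type, ← mul_sum, hw₂, mul_one, hw₁]

lemma weightedMean_prodWeight (w₁ : ι → ℝ) (w₂ : κ → ℝ) (F : ι × κ → ℝ) :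
    weightedMean (prodWeight w₁ w₂) F =
      weightedMean w₁ (fun i => weightedMean w₂ (fun j => F (i, j))) := by
  simp only [weightedMean, prodWeight, Fintype.sum_prod_type, mul_sum, mul_assoc]

lemma weightedVar_eq_weightedMean_sq (hw : ∑ i, w i = 1) (x : ι → ℝ) :
    weightedVar w x = weightedMean w (fun i => (x i - weightedMean w x) ^ 2) := by
  have expand : ∀ i, (x i - weightedMean w x) ^ 2 =
      x i ^ 2 - 2 * weightedMean w x * x i + weightedMean w x ^ 2 := fun i => by ring
  simp only [expand, weightedMean_add, weightedMean_sub, weightedMean_const_mul,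
    weightedMean_const hw, weightedVar]
  ring

lemma weightedVar_sub_const (hw : ∑ i, w i = 1) (x : ι → ℝ) (m : ℝ) :
    weightedVar w (fun i => x i - m) = weightedVar w x := by
  simp only [weightedVar_eq_weightedMean_sq hw, weightedMean_sub, weightedMean_const hw,
    sub_sub_sub_cancel_right]

lemma weightedVar_le_weightedMean_sq (x : ι → ℝ) :
    weightedVar w x ≤ weightedMean w (fun i => x i ^ 2) :=
  sub_le_self _ (sq_nonneg _)

lemma sq_weightedMean_mul_le (hw0 : ∀ i, 0 ≤ w i) (x y : ι → ℝ) :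
    weightedMean w (fun i => x i * y i) ^ 2 ≤
      weightedMean w (fun i => x i ^ 2) * weightedMean w (fun i => y i ^ 2) :=
  sum_sq_le_sum_mul_sum_of_sq_le_mul _ (fun i _ => mul_nonneg (hw0 i) (sq_nonneg _))
    (fun i _ => mul_nonneg (hw0 i) (sq_nonneg _)) fun i _ => le_of_eq (by ring)

lemma sq_weightedMean_mul_le_weightedMean_mul (hw0 : ∀ i, 0 ≤ w i) {u : ι → ℝ}
    (hu : ∀ i, 0 ≤ u i) (x : ι → ℝ) :
    weightedMean w (fun i => u i * x i) ^ 2 ≤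
      weightedMean w u * weightedMean w (fun i => u i * x i ^ 2) :=
  sum_sq_le_sum_mul_sum_of_sq_le_mul _ (fun i _ => mul_nonneg (hw0 i) (hu i))
    (fun i _ => mul_nonneg (hw0 i) (mul_nonneg (hu i) (sq_nonneg _))) fun i _ => le_of_eq (by ring)

lemma weightedVar_nonneg (hw0 : ∀ i, 0 ≤ w i) (hw : ∑ i, w i = 1) (x : ι → ℝ) :
    0 ≤ weightedVar w x := by
  rw [weightedVar_eq_weightedMean_sq hw]
  exact weightedMean_nonneg hw0 fun i => sq_nonneg _

end WeightedMean

/-- AM–GM on the cross term: `2X ≤ 2t√((1 - t²)PQ) ≤ t(1 + t)P + t(1 - t)Q`. -/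
lemma add_add_two_mul_le {t P Q Sp Sq X : ℝ} (ht0 : 0 ≤ t) (ht1 : t ≤ 1) (hP : 0 ≤ P)
    (hQ : 0 ≤ Q) (hSq0 : 0 ≤ Sq) (hSp : Sp ≤ (1 - t ^ 2) * P) (hSq : Sq ≤ t ^ 2 * Q)
    (hX : X ^ 2 ≤ Sp * Sq) :
    Sp + Sq + 2 * X ≤ (1 + t) * P + t * Q := by
  have hu : 0 ≤ t * (1 + t) * P := mul_nonneg (mul_nonneg ht0 (by linarith)) hP
  have hv : 0 ≤ t * (1 - t) * Q := mul_nonneg (mul_nonneg ht0 (by linarith)) hQ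
  have hSpSq : Sp * Sq ≤ (1 - t ^ 2) * P * (t ^ 2 * Q) :=
    mul_le_mul hSp hSq hSq0 (mul_nonneg (by nlinarith) hP)
  have hcross : (2 * X) ^ 2 ≤ (t * (1 + t) * P + t * (1 - t) * Q) ^ 2 := by
    have := four_mul_le_sq_add (t * (1 + t) * P) (t * (1 - t) * Q)
    nlinarith
  have := (abs_le_of_sq_le_sq hcross (add_nonneg hu hv)).trans' (le_abs_self _)
  nlinarith

section TwoBlock

variable {ι κ : Type*} [Fintype ι] [Fintype κ] {w₁ : ι → ℝ} {w₂ : κ → ℝ}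

lemma weightedMean_sq_weightedMean_mul_le (hw₁0 : ∀ i, 0 ≤ w₁ i) (hw₂0 : ∀ j, 0 ≤ w₂ j)
    {u : κ → ℝ} (hu : ∀ j, 0 ≤ u j) (G : ι → κ → ℝ) :
    weightedMean w₁ (fun i => weightedMean w₂ (fun j => u j * G i j) ^ 2) ≤
      weightedMean w₂ u * weightedMean w₂ (fun j => u j * weightedMean w₁ (fun i => G i j ^ 2)) :=
  calc _ ≤ weightedMean w₁
        (fun i => weightedMean w₂ u * weightedMean w₂ (fun j => u j * G i j ^ 2)) :=
        weightedMean_mono hw₁0 fun i => sq_weightedMean_mul_le_weightedMean_mul hw₂0 hu (G i)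
    _ = _ := by
      simp only [weightedMean_const_mul]
      rw [weightedMean_comm]
      simp only [weightedMean_const_mul]

lemma weightedMean_sq_weightedMean_le (hw₁0 : ∀ i, 0 ≤ w₁ i) (hw₂0 : ∀ j, 0 ≤ w₂ j)
    (hw₁ : ∑ i, w₁ i = 1) (hw₂ : ∑ j, w₂ j = 1) {c : κ → ℝ} (hc0 : ∀ j, 0 ≤ c j)
    (hc1 : ∀ j, c j ≤ 1) {F : ι → κ → ℝ}
    (hF : weightedMean w₁ (fun i => weightedMean w₂ (F i)) = 0) :
    weightedMean w₁ (fun i => weightedMean w₂ (F i) ^ 2) ≤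
      (1 + √(weightedMean w₂ (fun j => 1 - c j))) *
          weightedMean w₂ (fun j => c j * weightedVar w₁ (fun i => F i j)) +
        √(weightedMean w₂ (fun j => 1 - c j)) *
          weightedMean w₂ (fun j => (1 - c j) * weightedVar w₁ (fun i => F i j)) := by
  set ε := weightedMean w₂ (fun j => 1 - c j)
  set G := fun i j => F i j - weightedMean w₁ (fun i => F i j)
  set p := fun i => weightedMean w₂ (fun j => c j * G i j)
  set q := fun i => weightedMean w₂ (fun j => (1 - c j) * G i j)
  have hvar : ∀ j, weightedVar w₁ (fun i => F i j) = weightedMean w₁ (fun i => G i j ^ 2) :=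
    fun j => weightedVar_eq_weightedMean_sq hw₁ _
  have hmean : ∀ i, weightedMean w₂ (F i) = p i + q i := by
    have hg : weightedMean w₂ (fun j => weightedMean w₁ (fun i => F i j)) = 0 :=
      (weightedMean_comm _ _ F).symm.trans hF
    intro i
    simp only [p, q, G, ← weightedMean_add, ← add_mul, add_sub_cancel, one_mul,
      weightedMean_sub, hg, sub_zero]
  have hc : weightedMean w₂ c = 1 - ε := by
    simp only [ε, weightedMean_sub, weightedMean_const hw₂, sub_sub_cancel]
  have hc1' : ∀ j, 0 ≤ 1 - c j := fun j => sub_nonneg.2 (hc1 j)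
  have hp : weightedMean w₁ (fun i => p i ^ 2) ≤
      (1 - ε) * weightedMean w₂ (fun j => c j * weightedVar w₁ (fun i => F i j)) :=
    (weightedMean_sq_weightedMean_mul_le hw₁0 hw₂0 hc0 G).trans_eq (by simp only [hc, hvar])
  have hq : weightedMean w₁ (fun i => q i ^ 2) ≤
      ε * weightedMean w₂ (fun j => (1 - c j) * weightedVar w₁ (fun i => F i j)) :=
    (weightedMean_sq_weightedMean_mul_le hw₁0 hw₂0 hc1' G).trans_eq (by simp only [hvar]; rfl)
  have hε0 : 0 ≤ ε := weightedMean_nonneg hw₂0 hc1'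
  have hε1 : ε ≤ 1 := by linarith [weightedMean_nonneg hw₂0 hc0]
  have hexpand : weightedMean w₁ (fun i => (p i + q i) ^ 2) =
      weightedMean w₁ (fun i => p i ^ 2) + weightedMean w₁ (fun i => q i ^ 2) +
        2 * weightedMean w₁ (fun i => p i * q i) := by
    simp only [add_sq', weightedMean_add, mul_assoc, weightedMean_const_mul]
  simp only [hmean, hexpand]
  exact add_add_two_mul_le (Real.sqrt_nonneg ε) (Real.sqrt_le_one.2 hε1)
    (weightedMean_nonneg hw₂0 fun j => mul_nonneg (hc0 j) (weightedVar_nonneg hw₁0 hw₁ _))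
    (weightedMean_nonneg hw₂0 fun j => mul_nonneg (hc1' j) (weightedVar_nonneg hw₁0 hw₁ _))
    (weightedMean_nonneg hw₁0 fun i => sq_nonneg (q i))
    (by rwa [Real.sq_sqrt hε0]) (by rwa [Real.sq_sqrt hε0]) (sq_weightedMean_mul_le hw₁0 p q)

theorem two_block_poincare_of_weightedMean_eq_zero (hw₁0 : ∀ i, 0 ≤ w₁ i)
    (hw₂0 : ∀ j, 0 ≤ w₂ j) (hw₁ : ∑ i, w₁ i = 1) (hw₂ : ∑ j, w₂ j = 1) {c : κ → ℝ}
    (hc0 : ∀ j, 0 ≤ c j) (hc1 : ∀ j, c j ≤ 1) {F : ι → κ → ℝ}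
    (hF : weightedMean w₁ (fun i => weightedMean w₂ (F i)) = 0) :
    (1 - √(weightedMean w₂ (fun j => 1 - c j))) *
        weightedMean w₁ (fun i => weightedMean w₂ (fun j => F i j ^ 2)) ≤
      weightedMean w₂ (fun j => c j * weightedVar w₁ (fun i => F i j)) +
        weightedMean w₁ (fun i => weightedVar w₂ (F i)) := by
  have hsplit : weightedMean w₂ (fun j => c j * weightedVar w₁ (fun i => F i j)) +
      weightedMean w₂ (fun j => (1 - c j) * weightedVar w₁ (fun i => F i j)) ≤
      weightedMean w₁ (fun i => weightedMean w₂ (fun j => F i j ^ 2)) :=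
    calc _ = weightedMean w₂ (fun j => weightedVar w₁ (fun i => F i j)) := by
          rw [← weightedMean_add]
          simp only [← add_mul, add_sub_cancel, one_mul]
      _ ≤ weightedMean w₂ (fun j => weightedMean w₁ (fun i => F i j ^ 2)) :=
          weightedMean_mono hw₂0 fun j => weightedVar_le_weightedMean_sq _
      _ = _ := (weightedMean_comm _ _ _).symm
  have hvar₂ : weightedMean w₁ (fun i => weightedVar w₂ (F i)) =
      weightedMean w₁ (fun i => weightedMean w₂ (fun j => F i j ^ 2)) -
        weightedMean w₁ (fun i => weightedMean w₂ (F i) ^ 2) :=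
    weightedMean_sub _ _
  rw [hvar₂]
  linarith [weightedMean_sq_weightedMean_le hw₁0 hw₂0 hw₁ hw₂ hc0 hc1 hF,
    mul_le_mul_of_nonneg_left hsplit (Real.sqrt_nonneg (weightedMean w₂ (fun j => 1 - c j)))]

theorem two_block_poincare (hw₁0 : ∀ i, 0 ≤ w₁ i) (hw₂0 : ∀ j, 0 ≤ w₂ j)
    (hw₁ : ∑ i, w₁ i = 1) (hw₂ : ∑ j, w₂ j = 1) {C : ι × κ → ℝ}
    (hC0 : ∀ p, 0 ≤ C p) (hC1 : ∀ p, C p ≤ 1) (F : ι × κ → ℝ) :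
    (1 - √(weightedMean (prodWeight w₁ w₂) (fun p => 1 - C p))) *
        weightedVar (prodWeight w₁ w₂) F ≤
      weightedMean (prodWeight w₁ w₂)
          (fun p => C p * weightedVar w₁ (fun i => F (i, p.2))) +
        weightedMean (prodWeight w₁ w₂) (fun p => weightedVar w₂ (fun j => F (p.1, j))) := by
  have hW := sum_prodWeight hw₁ hw₂
  set m := weightedMean (prodWeight w₁ w₂) F
  set c := fun j => weightedMean w₁ (fun i => C (i, j))
  have hε : weightedMean (prodWeight w₁ w₂) (fun p => 1 - C p) =
      weightedMean w₂ (fun j => 1 - c j) := by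
    rw [weightedMean_prodWeight, weightedMean_comm]
    simp only [c, weightedMean_sub, weightedMean_const hw₁]
  have hvar : weightedVar (prodWeight w₁ w₂) F =
      weightedMean w₁ (fun i => weightedMean w₂ (fun j => (F (i, j) - m) ^ 2)) := by
    rw [weightedVar_eq_weightedMean_sq hW, weightedMean_prodWeight]
  have hvar₁ : weightedMean (prodWeight w₁ w₂)
      (fun p => C p * weightedVar w₁ (fun i => F (i, p.2))) =
      weightedMean w₂ (fun j => c j * weightedVar w₁ (fun i => F (i, j) - m)) := by
    rw [weightedMean_prodWeight, weightedMean_comm]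
    simp only [c, weightedMean_mul_const, weightedVar_sub_const hw₁]
  have hvar₂ : weightedMean (prodWeight w₁ w₂)
      (fun p => weightedVar w₂ (fun j => F (p.1, j))) =
      weightedMean w₁ (fun i => weightedVar w₂ (fun j => F (i, j) - m)) := by
    simp only [weightedMean_prodWeight, weightedMean_const hw₂, weightedVar_sub_const hw₂]
  have hF : weightedMean w₁ (fun i => weightedMean w₂ (fun j => F (i, j) - m)) = 0 := by
    rw [← weightedMean_prodWeight (F := fun p => F p - m), weightedMean_sub, weightedMean_const hW,
      sub_self]
  rw [hε, hvar, hvar₁, hvar₂]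
  exact two_block_poincare_of_weightedMean_eq_zero hw₁0 hw₂0 hw₁ hw₂
    (fun j => weightedMean_nonneg hw₁0 fun i => hC0 (i, j))
    (fun j => (weightedMean_mono hw₁0 fun i => hC1 (i, j)).trans_eq (weightedMean_const hw₁ 1)) hF

end TwoBlock

section PiWeight

variable {B : Type} [Fintype B]

def piWeight (ν : S → ℝ) (σ : B → S) : ℝ := ∏ b, ν (σ b)

lemma piWeight_nonneg {ν : S → ℝ} (hν : ∀ s, 0 ≤ ν s) (σ : B → S) : 0 ≤ piWeight ν σ :=
  prod_nonneg fun b _ => hν (σ b)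

lemma sum_piWeight [Fintype S] [DecidableEq B] {ν : S → ℝ} (hsum : ∑ s, ν s = 1) :
    ∑ σ : B → S, piWeight ν σ = 1 := by
  simp only [piWeight, ← Fintype.prod_sum, hsum, prod_const_one]

end PiWeight

section BlockMean

variable [Fintype S] [Fintype B₁] [Fintype B₂] [DecidableEq B₁] [DecidableEq B₂]

lemma blockMean_eq_weightedMean (ν : S → ℝ) (G : (B₁ ⊕ B₂ → S) → ℝ) :
    blockMean ν G =
      weightedMean (prodWeight (piWeight ν) (piWeight ν)) (fun p => G (Sum.elim p.1 p.2)) := by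
  rw [blockMean, ← (Equiv.sumArrowEquivProdArrow B₁ B₂ S).symm.sum_comp]
  simp only [weightedMean, prodWeight, piWeight, Fintype.prod_sum_type]
  rfl

lemma blockVar_eq_weightedVar (ν : S → ℝ) (f : (B₁ ⊕ B₂ → S) → ℝ) :
    blockVar ν f =
      weightedVar (prodWeight (piWeight ν) (piWeight ν)) (fun p => f (Sum.elim p.1 p.2)) := by
  simp only [blockVar, weightedVar, blockMean_eq_weightedMean]

end BlockMean

theorem block_dynamics_poincare_general
    {S B₁ B₂ : Type} [Fintype S] [Fintype B₁] [Fintype B₂] [DecidableEq B₁] [DecidableEq B₂]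
    (ν : S → ℝ) (hν : ∀ s, 0 < ν s) (hsum : ∑ s : S, ν s = 1)
    (c₁ : (B₁ ⊕ B₂ → S) → Bool)
    (ε : ℝ) (hε : ε = blockMean ν (fun ω => if c₁ ω then 0 else 1))
    (f : (B₁ ⊕ B₂ → S) → ℝ) :
    (1 - Real.sqrt ε) * blockVar ν f ≤
      blockMean ν (fun ω => if c₁ ω then varB₁ ν f ω else 0) +
        blockMean ν (fun ω => varB₂ ν f ω) := by
  have key := two_block_poincare (piWeight_nonneg fun s => (hν s).le)
    (piWeight_nonneg fun s => (hν s).le) (sum_piWeight (B := B₁) hsum)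
    (sum_piWeight (B := B₂) hsum)
    (C := fun p => if c₁ (Sum.elim p.1 p.2) then 1 else 0) (fun p => by split_ifs <;> norm_num)
    (fun p => by split_ifs <;> norm_num) (fun p => f (Sum.elim p.1 p.2))
  rw [hε, blockVar_eq_weightedVar, blockMean_eq_weightedMean, blockMean_eq_weightedMean,
    blockMean_eq_weightedMean]
  -- `varB₁ ν f (Sum.elim σ₁ σ₂)` is by definition the `weightedVar` of `f (Sum.elim · σ₂)`.
  convert key using 4 with p p
  · congr! 2 with p
    split_ifs <;> norm_num
  · exact (boole_mul _ _).symm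
  · rfl

/-- Poincaré inequality for the constrained two-block dynamics:
if the constraint `c₁` depends only on the `B₂`-coordinates and fails with
probability `ε`, then `(1 - √ε)·Var_μ(f) ≤ μ(c₁·Var_{B₁}(f)) + μ(Var_{B₂}(f))`,
i.e. the spectral gap of the constrained block dynamics is at least `1 - √ε`. -/
theorem block_dynamics_poincare
    {S B₁ B₂ : Type} [Fintype S] [Fintype B₁] [Fintype B₂] [DecidableEq B₁] [DecidableEq B₂]
    [Nonempty B₁] [Nonempty B₂]
    (ν : S → ℝ) (hν : ∀ s, 0 < ν s) (hsum : ∑ s : S, ν s = 1)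
    (c₁ : (B₁ ⊕ B₂ → S) → Bool)
    (hc₁ : ∀ ω ω' : B₁ ⊕ B₂ → S,
      (∀ b : B₂, ω (Sum.inr b) = ω' (Sum.inr b)) → c₁ ω = c₁ ω')
    (ε : ℝ) (hε : ε = blockMean ν (fun ω => if c₁ ω then 0 else 1))
    (f : (B₁ ⊕ B₂ → S) → ℝ) :
    (1 - Real.sqrt ε) * blockVar ν f ≤
      blockMean ν (fun ω => if c₁ ω then varB₁ ν f ω else 0) +
        blockMean ν (fun ω => varB₂ ν f ω) :=
  block_dynamics_poincare_general ν hν hsum c₁ ε hε f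

end KCSM
end

section
/- Let (X, 𝔉, μ) be a probability space and A ∈ 𝔉 with μ(A) = p ∈ (0,1); set q = 1 − p. Then for every f ∈ L²(μ) with ∫ f² dμ = 1, one has ∫_A f² dμ − 2·Var_μ(f) ≤ p + pq/(1+p); moreover p + pq/(1+p) < 1. (This is the quadratic-form estimate sup spec(ℒ + λV) ≤ λ(p + pq/(1+p)) at λ = γ/2 for a generator with spectral gap γ and V = multiplication by the indicator of A, which yields exponential decay of the persistence function.) -/
/-!
Split `f` along `A` and `Aᶜ`. With `u = ∫_A f²`, `a = ∫_A f` and `b = ∫_{Aᶜ} f`, Cauchy–Schwarz on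
each piece gives `a² ≤ p u` and `b² ≤ q (1 - u)`, while `Var f = 1 - (a + b)²`. Bounding
`(a + b)² ≤ a²/s + b²/(1 - s)` with a weight `s` depending only on `p` turns the left-hand side into
an affine function of `u ∈ [0, 1]`, whose maximum `2p/(1+p) = p + pq/(1+p)` is attained at `u = 1`.
-/

open MeasureTheory ProbabilityTheory Set

theorem add_sq_le_sq_div_add_sq_div {a b s : ℝ} (hs0 : 0 < s) (hs1 : s < 1) :
    (a + b) ^ 2 ≤ a ^ 2 / s + b ^ 2 / (1 - s) := by
  rw [div_add_div _ _ hs0.ne' (sub_pos.2 hs1).ne', le_div_iff₀ (by nlinarith)]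
  nlinarith [sq_nonneg ((1 - s) * a - s * b)]

theorem sub_two_mul_one_sub_sq_add_le {p u a b : ℝ} (hp0 : 0 < p) (hp1 : p < 1) (hu : u ≤ 1)
    (ha : a ^ 2 ≤ p * u) (hb : b ^ 2 ≤ (1 - p) * (1 - u)) :
    u - 2 * (1 - (a + b) ^ 2) ≤ 2 * p / (1 + p) := by
  have hq : 0 < 1 - p := sub_pos.2 hp1
  -- the weight for which the resulting affine bound in `u` is exact at `u = 1`
  set s := 2 * p * (1 + p) / (1 + 3 * p) with hs
  have hs' : 1 - s = (1 - p) * (1 + 2 * p) / (1 + 3 * p) := by rw [hs]; field_simp; ring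
  have hs0 : 0 < s := by positivity
  have hs1 : 0 < 1 - s := by rw [hs']; positivity
  calc u - 2 * (1 - (a + b) ^ 2)
      ≤ u - 2 * (1 - (p * u / s + (1 - p) * (1 - u) / (1 - s))) := by
        gcongr; exact (add_sq_le_sq_div_add_sq_div hs0 (by linarith)).trans (by gcongr)
    _ = 2 * p / (1 + p) - 2 * p ^ 2 * (1 - u) / ((1 + p) * (1 + 2 * p)) := by
        rw [hs', hs]; field_simp; ring
    _ ≤ 2 * p / (1 + p) := by
        have : 0 ≤ 1 - u := by linarith
        exact sub_le_self _ (by positivity)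

section CauchySchwarz

variable {Ω : Type*} [MeasurableSpace Ω] {f : Ω → ℝ}

theorem sq_integral_le_measureReal_univ_mul_integral_sq {ν : Measure Ω} [IsFiniteMeasure ν]
    (hf : MemLp f 2 ν) : (∫ x, f x ∂ν) ^ 2 ≤ ν.real univ * ∫ x, f x ^ 2 ∂ν := by
  rcases eq_zero_or_neZero ν with rfl | _
  · simp
  have hc : 0 < ν.real univ :=
    ENNReal.toReal_pos (NeZero.ne _) (measure_ne_top _ _)
  -- nonnegativity of the variance under the normalized measure
  have hvar := variance_nonneg f ((ν univ)⁻¹ • ν)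
  rw [variance_eq_sub (hf.smul_measure (ENNReal.inv_ne_top.2 (NeZero.ne _)))] at hvar
  simp only [integral_smul_measure, ENNReal.toReal_inv, ← measureReal_def, Pi.pow_apply,
    smul_eq_mul] at hvar
  rw [mul_pow, sub_nonneg, pow_two (ν.real univ)⁻¹, mul_assoc,
    mul_le_mul_iff_right₀ (inv_pos.2 hc), inv_mul_le_iff₀ hc] at hvar
  exact hvar

theorem sq_setIntegral_le_measureReal_mul_setIntegral_sq {μ : Measure Ω} [IsFiniteMeasure μ]
    (s : Set Ω) (hf : MemLp f 2 μ) :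
    (∫ x in s, f x ∂μ) ^ 2 ≤ μ.real s * ∫ x in s, f x ^ 2 ∂μ := by
  simpa using sq_integral_le_measureReal_univ_mul_integral_sq (hf.restrict s)

end CauchySchwarz

theorem setIntegral_sq_sub_two_mul_variance_le {Ω : Type*} [MeasurableSpace Ω]
    {μ : Measure Ω} [IsProbabilityMeasure μ] {A : Set Ω} (hA : MeasurableSet A)
    (hp0 : 0 < μ.real A) (hp1 : μ.real A < 1) {f : Ω → ℝ} (hf : MemLp f 2 μ)
    (hf1 : ∫ x, f x ^ 2 ∂μ = 1) :
    ∫ x in A, f x ^ 2 ∂μ - 2 * variance f μ ≤ 2 * μ.real A / (1 + μ.real A) := by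
  have hsplit_sq : ∫ x in Aᶜ, f x ^ 2 ∂μ = 1 - ∫ x in A, f x ^ 2 ∂μ := by
    rw [← hf1, ← integral_add_compl hA hf.integrable_sq, add_sub_cancel_left]
  have hvar : variance f μ = 1 - (∫ x in A, f x ∂μ + ∫ x in Aᶜ, f x ∂μ) ^ 2 := by
    rw [variance_eq_sub hf, integral_add_compl hA (hf.integrable one_le_two)]
    simpa using hf1
  have ha := sq_setIntegral_le_measureReal_mul_setIntegral_sq A hf
  have hb := sq_setIntegral_le_measureReal_mul_setIntegral_sq Aᶜ hf
  rw [probReal_compl_eq_one_sub hA, hsplit_sq] at hb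
  rw [hvar]
  refine sub_two_mul_one_sub_sq_add_le hp0 hp1 ?_ ha hb
  linarith [setIntegral_nonneg (μ := μ) hA.compl fun x _ => sq_nonneg (f x)]

/-- The quadratic-form estimate behind the exponential decay of the
persistence function: if `μ(A) = p ∈ (0,1)` and `q = 1 - p`, then for every
`f ∈ L²(μ)` with `∫ f² dμ = 1` one has
`∫_A f² dμ - 2·Var_μ(f) ≤ p + pq/(1+p)`, and `p + pq/(1+p) < 1`. -/
theorem persistence_quadratic_form_estimate
    {X : Type*} [MeasurableSpace X] (μ : Measure X) [IsProbabilityMeasure μ]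
    (A : Set X) (hA : MeasurableSet A) (p q : ℝ)
    (hp0 : 0 < p) (hp1 : p < 1) (hpA : μ A = ENNReal.ofReal p) (hq : q = 1 - p) :
    (∀ f : X → ℝ, MemLp f 2 μ → ∫ x, f x ^ 2 ∂μ = 1 →
      ∫ x in A, f x ^ 2 ∂μ - 2 * variance f μ ≤ p + p * q / (1 + p)) ∧
    p + p * q / (1 + p) < 1 := by
  have hbound : p + p * q / (1 + p) = 2 * p / (1 + p) := by
    rw [hq]; field_simp; ring
  have hpA' : μ.real A = p := by rw [measureReal_def, hpA, ENNReal.toReal_ofReal hp0.le]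
  rw [hbound]
  refine ⟨fun f hf hf1 => ?_, by rw [div_lt_one (by linarith)]; linarith⟩
  rw [← hpA'] at hp0 hp1 ⊢
  exact setIntegral_sq_sub_two_mul_variance_le hA hp0 hp1 hf hf1
end
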